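/- If f: {0,1}^n → {0,1} is transitive, then its desensitized version f_DT: {0,1}^{3n} → {0,1}, defined by f_DT(x_1 x_2 x_3) = 1 iff f(x_1) = f(x_2) = f(x_3) = 1 and p_{x_1} = p_{x_2} = p_{x_3}, is transitive, where the group witnessing transitivity of f_DT is generated by S_3 permuting the three n-bit blocks and by diagonal actions (σ,σ,σ) for σ in the transitive group of f. -/

import Mathlib

/-!
A block swap followed by a diagonal `id × σ` with `σ i = j` moves the coordinate `(a, i)` to
`(b, j)`. The predicate defining `f_DT` is invariant under both kinds of generators: permuting
blocks only reindexes its quantifiers over blocks, while `id × σ` replaces every block `x_k` by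
`x_k ∘ σ`, which preserves `f` and transports every certificate `p_{x_k}` along the same bijection
`σ`, hence preserves their equality. Invariance under the generators passes to the whole group
because the invariance group of a function is a subgroup.
-/

open Equiv Function

variable {ι α β γ : Type*}

def invariantPerms (F : (α → β) → γ) : Subgroup (Perm α) where
  carrier := {π | ∀ x, F (x ∘ π) = F x}
  one_mem' _ := rfl
  mul_mem' {π₁ π₂} h₁ h₂ x := by rw [Perm.coe_mul, ← comp_assoc, h₂, h₁]
  inv_mem' {π} h x := by
    rw [← h (x ∘ ⇑π⁻¹), comp_assoc, Perm.inv_def, symm_comp_self, comp_id]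

def blockGenerators (ι : Type*) (T : Subgroup (Perm α)) : Set (Perm (ι × α)) :=
  {π | ∃ ρ : Perm ι, π = prodCongr ρ (Equiv.refl α)} ∪
    {π | ∃ σ ∈ T, π = prodCongr (Equiv.refl ι) σ}

theorem exists_mem_closure_blockGenerators_apply_eq [DecidableEq ι] {T : Subgroup (Perm α)}
    (hT : ∀ i j : α, ∃ σ ∈ T, σ i = j) (p q : ι × α) :
    ∃ π ∈ Subgroup.closure (blockGenerators ι T), π p = q := by
  obtain ⟨a, i⟩ := p
  obtain ⟨b, j⟩ := q
  obtain ⟨σ, hσT, hσ⟩ := hT i j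
  refine ⟨prodCongr (swap a b) (Equiv.refl α) * prodCongr (Equiv.refl ι) σ, ?_, ?_⟩
  · exact mul_mem (Subgroup.subset_closure (Or.inl ⟨swap a b, rfl⟩))
      (Subgroup.subset_closure (Or.inr ⟨σ, hσT, rfl⟩))
  · simp [hσ]

/-- `f_DT x = 1`, the blocks `x_k` of `x` being `fun j => x (k, j)`. -/
def IsDesensitizedOne (f : (α → β) → Bool) (P : (α → β) → α → γ) (x : ι × α → β) : Prop :=
  (∀ k, f (fun j => x (k, j)) = true) ∧ ∀ k k', P (fun j => x (k, j)) = P (fun j => x (k', j))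

theorem isDesensitizedOne_comp_prodCongr_left (f : (α → β) → Bool) (P : (α → β) → α → γ)
    (ρ : Perm ι) (x : ι × α → β) :
    IsDesensitizedOne f P (x ∘ prodCongr ρ (Equiv.refl α)) ↔ IsDesensitizedOne f P x :=
  and_congr (ρ.forall_congr fun _ => Iff.rfl)
    (ρ.forall_congr fun _ => ρ.forall_congr fun _ => Iff.rfl)

theorem isDesensitizedOne_comp_prodCongr_right {f : (α → β) → Bool} {P : (α → β) → α → γ}
    {σ : Perm α} (hf : ∀ x, f (x ∘ σ) = f x) (hP : ∀ x, P (x ∘ σ) = P x ∘ σ)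
    (x : ι × α → β) :
    IsDesensitizedOne f P (x ∘ prodCongr (Equiv.refl ι) σ) ↔ IsDesensitizedOne f P x := by
  have hblock (k : ι) :
      (fun j => (x ∘ prodCongr (Equiv.refl ι) σ) (k, j)) = (fun j => x (k, j)) ∘ σ := rfl
  simp only [IsDesensitizedOne, hblock, hf, hP, σ.surjective.injective_comp_right.eq_iff]

theorem closure_blockGenerators_le_invariantPerms {f : (α → β) → Bool} {P : (α → β) → α → γ}
    {T : Subgroup (Perm α)} (hf : ∀ σ ∈ T, ∀ x, f (x ∘ σ) = f x)
    (hP : ∀ σ ∈ T, ∀ x, P (x ∘ σ) = P x ∘ σ) :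
    Subgroup.closure (blockGenerators ι T) ≤ invariantPerms (IsDesensitizedOne f P) := by
  rw [Subgroup.closure_le]
  rintro π (⟨ρ, rfl⟩ | ⟨σ, hσT, rfl⟩) x
  · exact propext (isDesensitizedOne_comp_prodCongr_left f P ρ x)
  · exact propext (isDesensitizedOne_comp_prodCongr_right (hf σ hσT) (hP σ hσT) x)

/-- If `f : {0,1}^n → {0,1}` is transitive (invariant under a transitive group `T`), and
the certificate assignment `P : x ↦ p_x` is equivariant under `T`, then the desensitized
version `f_DT : {0,1}^{3n} → {0,1}`, defined by `f_DT(x₁x₂x₃) = 1` iff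
`f(x₁) = f(x₂) = f(x₃) = 1` and `p_{x₁} = p_{x₂} = p_{x₃}`, is transitive; the witnessing
group is generated by `S_3` permuting the three blocks together with diagonal actions
`(σ,σ,σ)` for `σ ∈ T`. -/
theorem desensitized_transform_transitive (n : ℕ)
    (f : (Fin n → Bool) → Bool)
    (P : (Fin n → Bool) → (Fin n → Option Bool))
    (T : Subgroup (Equiv.Perm (Fin n)))
    (hT : ∀ i j : Fin n, ∃ σ ∈ T, σ i = j)
    (hf : ∀ σ ∈ T, ∀ x : Fin n → Bool, f (x ∘ σ) = f x)
    (hP : ∀ σ ∈ T, ∀ x : Fin n → Bool, P (x ∘ σ) = (P x) ∘ σ) :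
    ∃ G : Subgroup (Equiv.Perm (Fin 3 × Fin n)),
      G = Subgroup.closure
        ({π : Equiv.Perm (Fin 3 × Fin n) |
            ∃ ρ : Equiv.Perm (Fin 3), π = Equiv.prodCongr ρ (Equiv.refl (Fin n))} ∪
         {π : Equiv.Perm (Fin 3 × Fin n) |
            ∃ σ ∈ T, π = Equiv.prodCongr (Equiv.refl (Fin 3)) σ}) ∧
      (∀ p q : Fin 3 × Fin n, ∃ π ∈ G, π p = q) ∧
      (∀ π ∈ G, ∀ x : Fin 3 × Fin n → Bool,
        (decide ((∀ k : Fin 3, f (fun j => (x ∘ π) (k, j)) = true) ∧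
          (∀ k k' : Fin 3, P (fun j => (x ∘ π) (k, j)) = P (fun j => (x ∘ π) (k', j))))) =
        (decide ((∀ k : Fin 3, f (fun j => x (k, j)) = true) ∧
          (∀ k k' : Fin 3, P (fun j => x (k, j)) = P (fun j => x (k', j)))))) := by
  refine ⟨Subgroup.closure (blockGenerators (Fin 3) T), rfl,
    exists_mem_closure_blockGenerators_apply_eq hT, fun π hπ x => ?_⟩
  have hinv := closure_blockGenerators_le_invariantPerms (ι := Fin 3) hf hP hπ x
  exact decide_eq_decide.mpr (Iff.of_eq hinv)
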